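/- Let y₁, …, yₙ be positive reals, not all equal. Define 1/μ̂ = (Σᵢ yᵢ log yᵢ)/(Σᵢ yᵢ) - (1/n) Σᵢ log yᵢ, and let μ̂_MLE > 0 be the unique solution of log(μ) - ψ(μ) = log((1/n) Σᵢ yᵢ) - (1/n) Σᵢ log yᵢ. Then μ̂ > 0 and μ̂ < 2 μ̂_MLE. -/

import Mathlib

open Real Finset

/-- The digamma function: derivative of `log ∘ Γ`. -/
noncomputable def digamma (x : ℝ) : ℝ := deriv (fun y : ℝ => Real.log (Real.Gamma y)) x

section Aux

open Filter

lemma logGamma_diff {x : ℝ} (hx : 0 < x) :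
    DifferentiableAt ℝ (fun y : ℝ => Real.log (Real.Gamma y)) x := by
  have h1 : DifferentiableAt ℝ Real.Gamma x :=
    Real.differentiableAt_Gamma (fun m => by
      intro h; have : (0:ℝ) ≤ (m:ℝ) := Nat.cast_nonneg m; rw [h] at hx; linarith)
  exact h1.log (Real.Gamma_pos_of_pos hx).ne'

lemma hasDerivAt_logGamma {x : ℝ} (hx : 0 < x) :
    HasDerivAt (fun y : ℝ => Real.log (Real.Gamma y)) (digamma x) x :=
  (logGamma_diff hx).hasDerivAt

lemma digamma_add_one {x : ℝ} (hx : 0 < x) : digamma (x + 1) = digamma x + 1 / x := by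
  have h1 : HasDerivAt (fun y : ℝ => Real.log (Real.Gamma (y + 1))) (digamma (x + 1)) x := by
    have := (hasDerivAt_logGamma (by linarith : (0:ℝ) < x + 1)).comp x
      ((hasDerivAt_id x).add_const 1)
    simpa [Function.comp_def] using this
  have h2 : HasDerivAt (fun y : ℝ => Real.log y + Real.log (Real.Gamma y))
      (1 / x + digamma x) x := by
    have := (Real.hasDerivAt_log hx.ne').add (hasDerivAt_logGamma hx)
    simpa [one_div, Pi.add_def] using this
  have heq : (fun y : ℝ => Real.log (Real.Gamma (y + 1))) =ᶠ[nhds x]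
      (fun y : ℝ => Real.log y + Real.log (Real.Gamma y)) := by
    filter_upwards [eventually_gt_nhds hx] with y hy
    rw [Real.Gamma_add_one hy.ne', Real.log_mul hy.ne' (Real.Gamma_pos_of_pos hy).ne']
  have h1' : HasDerivAt (fun y : ℝ => Real.log y + Real.log (Real.Gamma y))
      (digamma (x + 1)) x := h1.congr_of_eventuallyEq heq.symm
  have := h1'.unique h2
  linarith

lemma digamma_le_log {a : ℝ} (ha : 0 < a) : digamma a ≤ Real.log a := by
  have hc := Real.convexOn_log_Gamma
  have hslope := hc.deriv_le_slope (Set.mem_Ioi.mpr ha)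
    (Set.mem_Ioi.mpr (by linarith : (0:ℝ) < a + 1)) (by linarith) (logGamma_diff ha)
  rw [slope_def_field] at hslope
  have : ((Real.log ∘ Real.Gamma) (a+1) - (Real.log ∘ Real.Gamma) a) / (a + 1 - a)
      = Real.log a := by
    simp only [Function.comp_apply, Real.Gamma_add_one ha.ne',
      Real.log_mul ha.ne' (Real.Gamma_pos_of_pos ha).ne']
    ring
  rw [this] at hslope
  exact hslope

lemma log_succ_sub_log_le {t : ℝ} (ht : 0 < t) :
    Real.log (t + 1) - Real.log t ≤ (2 * t + 1) / (2 * t * (t + 1)) := by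
  have ht1 : (0:ℝ) < t + 1 := by linarith
  have hy : (1:ℝ) < (t + 1) / t := by
    rw [lt_div_iff₀ ht]; linarith
  have hy0 : (0:ℝ) < (t + 1) / t := by positivity
  have hs : Real.log ((t + 1) / t) ≤ Real.sinh (Real.log ((t + 1) / t)) :=
    le_of_lt (Real.self_lt_sinh_iff.mpr (by rw [Real.log_pos_iff hy0.le]; exact hy))
  rw [Real.sinh_log hy0] at hs
  have hlog : Real.log ((t + 1) / t) = Real.log (t + 1) - Real.log t :=
    Real.log_div ht1.ne' ht.ne'
  rw [hlog] at hs
  have hinv : ((t + 1) / t)⁻¹ = t / (t + 1) := by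
    rw [inv_div]
  rw [hinv] at hs
  have heq : ((t + 1) / t - t / (t + 1)) / 2 = (2 * t + 1) / (2 * t * (t + 1)) := by
    field_simp
    ring
  linarith [heq ▸ hs]

lemma digamma_add_nat {x : ℝ} (hx : 0 < x) (N : ℕ) :
    digamma (x + N) = digamma x + ∑ k ∈ range N, 1 / (x + k) := by
  induction N with
  | zero => simp
  | succ n ih =>
    have hxn : (0:ℝ) < x + n := by positivity
    have : (x + (n + 1 : ℕ) : ℝ) = (x + n) + 1 := by push_cast; ring
    rw [this, digamma_add_one hxn, ih, Finset.sum_range_succ]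
    ring

lemma half_bound {x : ℝ} (hx : 0 < x) (N : ℕ) :
    1 / (2 * x) - 1 / (2 * (x + N)) ≤ Real.log x - digamma x := by
  have key : ∀ k : ℕ, 1 / (2 * (x + k)) - 1 / (2 * (x + (k+1:ℕ))) ≤
      1 / (x + k) - (Real.log (x + (k+1:ℕ)) - Real.log (x + k)) := by
    intro k
    have ht : (0:ℝ) < x + k := by positivity
    have h := log_succ_sub_log_le ht
    have e1 : (x + (k+1:ℕ) : ℝ) = (x + k) + 1 := by push_cast; ring
    rw [e1]
    have e2 : 1 / (2 * (x + k)) - 1 / (2 * ((x + k) + 1)) =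
        1 / (x + k) - (2 * (x + k) + 1) / (2 * (x + k) * ((x + k) + 1)) := by
      field_simp
      ring
    rw [e2]
    linarith
  have hsum := Finset.sum_le_sum (fun k (_ : k ∈ range N) => key k)
  have t1 : ∑ k ∈ range N, (1 / (2 * (x + k)) - 1 / (2 * (x + (k+1:ℕ)))) =
      1 / (2 * (x + (0:ℕ))) - 1 / (2 * (x + N)) :=
    Finset.sum_range_sub' (fun k => 1 / (2 * (x + (k:ℕ)))) N
  have t2 : ∑ k ∈ range N, (Real.log (x + (k+1:ℕ)) - Real.log (x + k)) =
      Real.log (x + N) - Real.log (x + (0:ℕ)) :=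
    Finset.sum_range_sub (fun k => Real.log (x + (k:ℕ))) N
  have t3 : ∑ k ∈ range N, (1 / (x + (k:ℕ)) - (Real.log (x + (k+1:ℕ)) - Real.log (x + k))) =
      (∑ k ∈ range N, 1 / (x + (k:ℕ))) - (Real.log (x + N) - Real.log (x + (0:ℕ))) := by
    rw [Finset.sum_sub_distrib, t2]
  rw [t1, t3] at hsum
  simp only [Nat.cast_zero, add_zero] at hsum
  have hdig := digamma_add_nat hx N
  have hlog := digamma_le_log (a := x + N) (by positivity)
  have : digamma x ≤ Real.log (x + N) - ∑ k ∈ range N, 1 / (x + k) := by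
    rw [hdig] at hlog; linarith
  linarith

lemma one_div_two_mul_le {x : ℝ} (hx : 0 < x) :
    1 / (2 * x) ≤ Real.log x - digamma x := by
  have hA : Tendsto (fun N : ℕ => 2 * (x + (N:ℝ))) atTop atTop := by
    apply Filter.Tendsto.const_mul_atTop (by norm_num : (0:ℝ) < 2)
    exact tendsto_atTop_add_const_left _ x tendsto_natCast_atTop_atTop
  have h0 : Tendsto (fun N : ℕ => 1 / (2 * (x + (N:ℝ)))) atTop (nhds 0) := by
    have h := hA.inv_tendsto_atTop
    have e : (fun N : ℕ => 2 * (x + (N:ℝ)))⁻¹ = fun N : ℕ => 1 / (2 * (x + (N:ℝ))) := by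
      funext N; simp [one_div]
    rwa [e] at h
  have htend : Tendsto (fun N : ℕ => 1 / (2 * x) - 1 / (2 * (x + N))) atTop
      (nhds (1 / (2 * x))) := by
    simpa using (tendsto_const_nhds.sub h0)
  exact le_of_tendsto' htend (fun N => half_bound hx N)

lemma mul_log_sub_lt {p q : ℝ} (hp : 0 < p) (hq : 0 < q) (hne : q ≠ p) :
    p * Real.log q - p * Real.log p < q - p := by
  have hne1 : q / p ≠ 1 := by
    intro h; apply hne; field_simp at h; linarith
  have h := Real.log_lt_sub_one_of_pos (show 0 < q / p by positivity) hne1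
  rw [Real.log_div hq.ne' hp.ne'] at h
  calc p * Real.log q - p * Real.log p = p * (Real.log q - Real.log p) := by ring
    _ < p * (q / p - 1) := mul_lt_mul_of_pos_left h hp
    _ = q - p := by field_simp

lemma mul_log_sub_le {p q : ℝ} (hp : 0 < p) (hq : 0 < q) :
    p * Real.log q - p * Real.log p ≤ q - p := by
  rcases eq_or_ne q p with h | h
  · subst h; simp
  · exact (mul_log_sub_lt hp hq h).le

lemma jensen_key {n : ℕ} (hn : 0 < n) (y : Fin n → ℝ) (hy : ∀ i, 0 < y i)
    (hne : ∃ i j, y i ≠ y j) :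
    Real.log ((1 / n) * ∑ i, y i) < (∑ i, y i * Real.log (y i)) / (∑ i, y i) := by
  have hS : (0:ℝ) < ∑ i, y i :=
    Finset.sum_pos (fun i _ => hy i) (univ_nonempty_iff.mpr ⟨⟨0, hn⟩⟩)
  set S := ∑ i, y i with hSdef
  set m := (1 / (n:ℝ)) * S with hmdef
  have hn' : (0:ℝ) < n := Nat.cast_pos.mpr hn
  have hm : 0 < m := by positivity
  obtain ⟨i1, j1, hij⟩ := hne
  have hex : ∃ i : Fin n, y i ≠ m := by
    by_contra h
    push_neg at h
    exact hij ((h i1).trans (h j1).symm)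
  obtain ⟨i0, hi0⟩ := hex
  have hterm : ∀ i : Fin n, 0 ≤ y i * Real.log (y i) - y i * Real.log m - y i + m := by
    intro i
    have := mul_log_sub_le (hy i) hm
    linarith
  have htermlt : 0 < y i0 * Real.log (y i0) - y i0 * Real.log m - y i0 + m := by
    have := mul_log_sub_lt (hy i0) hm (fun h => hi0 h.symm)
    linarith
  have hsum : (0:ℝ) < ∑ i, (y i * Real.log (y i) - y i * Real.log m - y i + m) := by
    have := Finset.sum_lt_sum (f := fun _ : Fin n => (0:ℝ))
      (g := fun i => y i * Real.log (y i) - y i * Real.log m - y i + m)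
      (fun i _ => hterm i) ⟨i0, Finset.mem_univ i0, htermlt⟩
    simpa using this
  have hexp : ∑ i, (y i * Real.log (y i) - y i * Real.log m - y i + m) =
      (∑ i, y i * Real.log (y i)) - S * Real.log m := by
    rw [Finset.sum_add_distrib, Finset.sum_sub_distrib, Finset.sum_sub_distrib,
      ← Finset.sum_mul, Finset.sum_const, Finset.card_univ, Fintype.card_fin,
      nsmul_eq_mul]
    have : (n:ℝ) * m = S := by
      rw [hmdef]; field_simp
    rw [← hSdef, this]
    ring
  rw [hexp] at hsum
  rw [lt_div_iff₀ hS]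
  linarith

end Aux

/-- The closed-form estimator satisfies `0 < μ̂ < 2 μ̂_MLE`. -/
theorem muHat_lt_two_mul_muMLE (n : ℕ) (hn : 0 < n) (y : Fin n → ℝ)
    (hy : ∀ i, 0 < y i) (hne : ∃ i j, y i ≠ y j) (muHat muMLE : ℝ)
    (hmuHat : 1 / muHat =
      (∑ i, y i * Real.log (y i)) / (∑ i, y i) - (1 / n) * ∑ i, Real.log (y i))
    (hMLEpos : 0 < muMLE)
    (hMLE : Real.log muMLE - digamma muMLE =
      Real.log ((1 / n) * ∑ i, y i) - (1 / n) * ∑ i, Real.log (y i)) :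
    0 < muHat ∧ muHat < 2 * muMLE := by
  have hJ := jensen_key hn y hy hne
  have h1 : 1 / (2 * muMLE) < 1 / muHat := by
    have h2 := one_div_two_mul_le hMLEpos
    rw [hMLE] at h2
    rw [hmuHat]
    linarith
  have h2m : (0:ℝ) < 2 * muMLE := by linarith
  have hpos : 0 < 1 / muHat := lt_trans (by positivity) h1
  have hmuHatpos : 0 < muHat := by
    by_contra h
    push_neg at h
    have : 1 / muHat ≤ 0 := one_div_nonpos.mpr h
    linarith
  exact ⟨hmuHatpos, (one_div_lt_one_div h2m hmuHatpos).mp h1⟩
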